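/- Let Z be a Banach space with an unconditional Schauder decomposition (Z_n)_{n≥1} satisfying a lower 2-estimate, let X_n = Z_1 ⊕ ⋯ ⊕ Z_n with inclusion maps φ_n, and let T_n : Z → X_n be the associated aggregate projections (so T_n(z) → z). Then T(z) = (T_n(z))_{n≥1} defines a bounded linear embedding T : Z → Ĵ(X_n), with ‖T(z)‖_J ≤ √((M+1)/2)·K·‖z‖, where K is the suppression constant of the decomposition and M is its lower 2-estimate constant; moreover Ĵ(X_n) = J(X_n) ⊕ R(T), so Ĵ(X_n) ≅ J(X_n) ⊕ Z. -/

import Mathlib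

/-!
Because every `φ_n` is an inclusion, the term of `σ(Tz, S)²` belonging to consecutive points
`p < q` of `S` is `‖∑_{p < i ≤ q} P_i z‖²`. Consecutive pairs give disjoint blocks, so the lower
2-estimate followed by the suppression bound gives `σ(Tz, S)² ≤ M K² ‖z‖²`, while
`‖T_{max S} z‖ ≤ K ‖z‖`. Conversely, the entries of any `x ∈ Ĵ` form a Cauchy sequence in `Z`;
its limit `z` is the unique vector with `x - Tz ∈ J`, because `T_n z → z`.
-/

open Filter Topology

/-- Composition `φ_n^m = φ_{m-1} ∘ ⋯ ∘ φ_n : X n →L X m` (junk value for `m < n`). -/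
noncomputable def phiTo {X : ℕ → Type*} [∀ n, NormedAddCommGroup (X n)]
    [∀ n, NormedSpace ℝ (X n)] (φ : ∀ n, X n →L[ℝ] X (n + 1)) (n : ℕ) :
    (m : ℕ) → X n →L[ℝ] X m
  | 0 => 0
  | m + 1 =>
    if h : m + 1 = n then by rw [h]; exact ContinuousLinearMap.id ℝ (X n)
    else (φ m).comp (phiTo φ n m)

open Classical in
/-- `σ(x,S)²`: the sum over consecutive pairs `p < q` of `S` of `‖φ_p^q(x_p) - x_q‖²`. -/
noncomputable def sigma2 {X : ℕ → Type*} [∀ n, NormedAddCommGroup (X n)]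
    [∀ n, NormedSpace ℝ (X n)] (φ : ∀ n, X n →L[ℝ] X (n + 1))
    (x : ∀ n, X n) (S : Finset ℕ) : ℝ :=
  ∑ p ∈ S, ∑ q ∈ S,
    if p < q ∧ ∀ r ∈ S, ¬(p < r ∧ r < q) then ‖phiTo φ p q (x p) - x q‖ ^ 2 else 0

noncomputable def sigmaJ {X : ℕ → Type*} [∀ n, NormedAddCommGroup (X n)]
    [∀ n, NormedSpace ℝ (X n)] (φ : ∀ n, X n →L[ℝ] X (n + 1))
    (x : ∀ n, X n) (S : Finset ℕ) : ℝ :=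
  Real.sqrt (sigma2 φ x S)

/-- `ρ(x,S)² = σ(x,S)² + ‖x_{max S}‖²`. -/
noncomputable def rho2 {X : ℕ → Type*} [∀ n, NormedAddCommGroup (X n)]
    [∀ n, NormedSpace ℝ (X n)] (φ : ∀ n, X n →L[ℝ] X (n + 1))
    (x : ∀ n, X n) (S : Finset ℕ) (hS : S.Nonempty) : ℝ :=
  sigma2 φ x S + ‖x (S.max' hS)‖ ^ 2

noncomputable def rhoJ {X : ℕ → Type*} [∀ n, NormedAddCommGroup (X n)]
    [∀ n, NormedSpace ℝ (X n)] (φ : ∀ n, X n →L[ℝ] X (n + 1))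
    (x : ∀ n, X n) (S : Finset ℕ) (hS : S.Nonempty) : ℝ :=
  Real.sqrt (rho2 φ x S hS)

/-- The set of values `ρ(x,S)` over finite nonempty `S ⊆ ℕ`. -/
def rhoSet {X : ℕ → Type*} [∀ n, NormedAddCommGroup (X n)]
    [∀ n, NormedSpace ℝ (X n)] (φ : ∀ n, X n →L[ℝ] X (n + 1))
    (x : ∀ n, X n) : Set ℝ :=
  {r : ℝ | ∃ (S : Finset ℕ) (hS : S.Nonempty), r = rhoJ φ x S hS}

/-- Membership in `Ĵ(Φ)`: `sup_S ρ(x,S) < ∞`. -/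
def memJhat {X : ℕ → Type*} [∀ n, NormedAddCommGroup (X n)]
    [∀ n, NormedSpace ℝ (X n)] (φ : ∀ n, X n →L[ℝ] X (n + 1))
    (x : ∀ n, X n) : Prop :=
  BddAbove (rhoSet φ x)

/-- The norm `‖x‖_J = (1/√2) sup_S ρ(x,S)`. -/
noncomputable def normJ {X : ℕ → Type*} [∀ n, NormedAddCommGroup (X n)]
    [∀ n, NormedSpace ℝ (X n)] (φ : ∀ n, X n →L[ℝ] X (n + 1))
    (x : ∀ n, X n) : ℝ :=
  (Real.sqrt 2)⁻¹ * sSup (rhoSet φ x)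

/-- Membership in `J(Φ)`: member of `Ĵ(Φ)` with `‖x_n‖ → 0`. -/
def memJ {X : ℕ → Type*} [∀ n, NormedAddCommGroup (X n)]
    [∀ n, NormedSpace ℝ (X n)] (φ : ∀ n, X n →L[ℝ] X (n + 1))
    (x : ∀ n, X n) : Prop :=
  memJhat φ x ∧ Tendsto (fun n => ‖x n‖) atTop (𝓝 0)

open Classical in
/-- The coordinate restriction `P_I`. -/
noncomputable def restrictSeq {X : ℕ → Type*} [∀ n, NormedAddCommGroup (X n)]
    (I : Set ℕ) (x : ∀ n, X n) : ∀ n, X n :=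
  fun n => if n ∈ I then x n else 0

/-- The stepping map `Q_α`. -/
noncomputable def stepSeq {X : ℕ → Type*} [∀ n, NormedAddCommGroup (X n)]
    [∀ n, NormedSpace ℝ (X n)] (φ : ∀ n, X n →L[ℝ] X (n + 1))
    (α : ℕ → ℕ) (x : ∀ n, X n) : ∀ n, X n :=
  fun n => phiTo φ (α n) n (x (α n))

section Chain
variable {X : ℕ → Type*} [∀ n, NormedAddCommGroup (X n)] [∀ n, NormedSpace ℝ (X n)]
  (φ : ∀ n, X n →L[ℝ] X (n + 1))

lemma phiTo_zero_left (m : ℕ) : phiTo φ 0 m = 0 := by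
  induction m with
  | zero => rfl
  | succ m ih => simp [phiTo, ih]

lemma phiTo_self {n : ℕ} (hn : n ≠ 0) : phiTo φ n n = ContinuousLinearMap.id ℝ (X n) := by
  obtain ⟨m, rfl⟩ := Nat.exists_eq_succ_of_ne_zero hn
  simp only [phiTo]
  rfl

lemma phiTo_succ {n m : ℕ} (hnm : n ≤ m) : phiTo φ n (m + 1) = (φ m).comp (phiTo φ n m) := by
  simp only [phiTo, dif_neg (show m + 1 ≠ n by omega)]

open Classical in
noncomputable def consPairs (S : Finset ℕ) : Finset (ℕ × ℕ) :=
  (S ×ˢ S).filter fun pq => pq.1 < pq.2 ∧ ∀ r ∈ S, ¬(pq.1 < r ∧ r < pq.2)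

lemma mem_consPairs {S : Finset ℕ} {pq : ℕ × ℕ} :
    pq ∈ consPairs S ↔ pq.1 ∈ S ∧ pq.2 ∈ S ∧ pq.1 < pq.2 ∧ ∀ r ∈ S, ¬(pq.1 < r ∧ r < pq.2) := by
  simp [consPairs, and_assoc]

lemma sigma2_eq_sum_consPairs (x : ∀ n, X n) (S : Finset ℕ) :
    sigma2 φ x S = ∑ pq ∈ consPairs S, ‖phiTo φ pq.1 pq.2 (x pq.1) - x pq.2‖ ^ 2 := by
  classical
  rw [sigma2, ← Finset.sum_product', consPairs, Finset.sum_filter]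

lemma sigma2_nonneg (x : ∀ n, X n) (S : Finset ℕ) : 0 ≤ sigma2 φ x S := by
  rw [sigma2_eq_sum_consPairs]
  positivity

lemma sigma2_singleton (x : ∀ n, X n) (n : ℕ) : sigma2 φ x {n} = 0 := by
  simp [sigma2]

lemma consPairs_insert_of_max'_lt {S : Finset ℕ} (hS : S.Nonempty) {q : ℕ}
    (hq : S.max' hS < q) : consPairs (insert q S) = insert (S.max' hS, q) (consPairs S) := by
  have hle := S.le_max'
  ext ⟨a, b⟩
  simp only [mem_consPairs, Finset.mem_insert, Prod.mk.injEq, forall_eq_or_imp]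
  constructor
  · rintro ⟨ha | ha, hb | hb, hab, -, hbetween⟩
    · omega
    · exact absurd hab (by have := hle b hb; omega)
    · refine Or.inl ⟨le_antisymm (hle a ha) (not_lt.mp fun h => ?_), hb⟩
      exact hbetween _ (S.max'_mem hS) ⟨h, by omega⟩
    · exact Or.inr ⟨ha, hb, hab, hbetween⟩
  · rintro (⟨rfl, rfl⟩ | ⟨ha, hb, hab, hbetween⟩)
    · refine ⟨Or.inr (S.max'_mem hS), Or.inl rfl, hq, by omega, fun r hr hr' => ?_⟩
      have := hle r hr
      omega
    · refine ⟨Or.inr ha, Or.inr hb, hab, fun h => ?_, hbetween⟩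
      have := hle b hb
      omega

lemma sigma2_insert_of_max'_lt (x : ∀ n, X n) {S : Finset ℕ} (hS : S.Nonempty) {q : ℕ}
    (hq : S.max' hS < q) :
    sigma2 φ x (insert q S) =
      sigma2 φ x S + ‖phiTo φ (S.max' hS) q (x (S.max' hS)) - x q‖ ^ 2 := by
  have hnew : (S.max' hS, q) ∉ consPairs S := fun h =>
    (hq.trans_le (S.le_max' q (mem_consPairs.mp h).2.1)).false
  rw [sigma2_eq_sum_consPairs, consPairs_insert_of_max'_lt hS hq, Finset.sum_insert hnew,
    sigma2_eq_sum_consPairs, add_comm]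

lemma pairwiseDisjoint_Ioc_consPairs (S : Finset ℕ) :
    (consPairs S : Set (ℕ × ℕ)).PairwiseDisjoint fun pq => Finset.Ioc pq.1 pq.2 := by
  rintro ⟨p, q⟩ hpq ⟨p', q'⟩ hpq' hne
  simp only [Finset.mem_coe, mem_consPairs] at hpq hpq'
  obtain ⟨hp, hq, hlt, hcons⟩ := hpq
  obtain ⟨hp', hq', hlt', hcons'⟩ := hpq'
  simp only [Function.onFun, Finset.disjoint_left, Finset.mem_Ioc]
  intro a ha ha'
  rcases lt_trichotomy p p' with h | rfl | h
  · exact hcons p' hp' ⟨h, by omega⟩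
  · rcases lt_trichotomy q q' with h | rfl | h
    · exact hcons' q hq ⟨by omega, h⟩
    · exact hne rfl
    · exact hcons q' hq' ⟨by omega, h⟩
  · exact hcons' p hp ⟨h, by omega⟩

end Chain

lemma norm_sub_sq_le {E : Type*} [SeminormedAddCommGroup E] (u v : E) :
    ‖u - v‖ ^ 2 ≤ 2 * ‖u‖ ^ 2 + 2 * ‖v‖ ^ 2 := by
  calc ‖u - v‖ ^ 2 ≤ (‖u‖ + ‖v‖) ^ 2 := by gcongr; exact norm_sub_le u v
    _ ≤ 2 * ‖u‖ ^ 2 + 2 * ‖v‖ ^ 2 := by linarith [add_sq_le (a := ‖u‖) (b := ‖v‖)]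

section JSum
variable {X : ℕ → Type*} [∀ n, NormedAddCommGroup (X n)] [∀ n, NormedSpace ℝ (X n)]
  {φ : ∀ n, X n →L[ℝ] X (n + 1)} {x y : ∀ n, X n}

lemma sigma2_le_rho2 (S : Finset ℕ) (hS : S.Nonempty) : sigma2 φ x S ≤ rho2 φ x S hS :=
  le_add_of_nonneg_right (sq_nonneg _)

lemma rho2_nonneg (S : Finset ℕ) (hS : S.Nonempty) : 0 ≤ rho2 φ x S hS :=
  (sigma2_nonneg φ x S).trans (sigma2_le_rho2 S hS)

lemma memJhat_iff_exists_rho2_le :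
    memJhat φ x ↔ ∃ C, ∀ (S : Finset ℕ) (hS : S.Nonempty), rho2 φ x S hS ≤ C := by
  constructor
  · rintro ⟨B, hB⟩
    exact ⟨B ^ 2, fun S hS => (Real.sqrt_le_iff.mp (hB ⟨S, hS, rfl⟩)).2⟩
  · rintro ⟨C, hC⟩
    exact ⟨√C, by rintro _ ⟨S, hS, rfl⟩; exact Real.sqrt_le_sqrt (hC S hS)⟩

lemma norm_le_sSup_rhoSet (hx : memJhat φ x) (n : ℕ) : ‖x n‖ ≤ sSup (rhoSet φ x) := by
  refine le_csSup hx ⟨{n}, Finset.singleton_nonempty n, ?_⟩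
  rw [rhoJ, rho2, sigma2_singleton, Finset.max'_singleton, zero_add,
    Real.sqrt_sq (norm_nonneg _)]

lemma normJ_le_of_rho2_le {C : ℝ} (h : ∀ (S : Finset ℕ) (hS : S.Nonempty), rho2 φ x S hS ≤ C) :
    normJ φ x ≤ (√2)⁻¹ * √C := by
  refine mul_le_mul_of_nonneg_left (Real.sSup_le ?_ (Real.sqrt_nonneg C)) (by positivity)
  rintro _ ⟨S, hS, rfl⟩
  exact Real.sqrt_le_sqrt (h S hS)

lemma rho2_sub_le (S : Finset ℕ) (hS : S.Nonempty) :
    rho2 φ (x - y) S hS ≤ 2 * rho2 φ x S hS + 2 * rho2 φ y S hS := by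
  have hσ : sigma2 φ (x - y) S ≤ 2 * sigma2 φ x S + 2 * sigma2 φ y S := by
    simp only [sigma2_eq_sum_consPairs, Finset.mul_sum, ← Finset.sum_add_distrib]
    refine Finset.sum_le_sum fun pq _ => ?_
    have hsplit : phiTo φ pq.1 pq.2 ((x - y) pq.1) - (x - y) pq.2 =
        (phiTo φ pq.1 pq.2 (x pq.1) - x pq.2) - (phiTo φ pq.1 pq.2 (y pq.1) - y pq.2) := by
      simp only [Pi.sub_apply, map_sub]
      abel
    rw [hsplit]
    exact norm_sub_sq_le _ _
  have hmax := norm_sub_sq_le (x (S.max' hS)) (y (S.max' hS))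
  simp only [rho2, Pi.sub_apply] at hmax ⊢
  linarith

lemma memJhat.sub (hx : memJhat φ x) (hy : memJhat φ y) : memJhat φ (x - y) := by
  rw [memJhat_iff_exists_rho2_le] at hx hy ⊢
  obtain ⟨C, hC⟩ := hx
  obtain ⟨D, hD⟩ := hy
  exact ⟨2 * C + 2 * D, fun S hS => (rho2_sub_le S hS).trans (by linarith [hC S hS, hD S hS])⟩

end JSum

lemma tendsto_sum_Icc_of_hasSum {E : Type*} [AddCommMonoid E] [TopologicalSpace E] {f : ℕ → E}
    {a : E} (h : HasSum (fun n => f (n + 1)) a) :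
    Tendsto (fun n => ∑ i ∈ Finset.Icc 1 n, f i) atTop (𝓝 a) := by
  have hshift : ∀ n, ∑ i ∈ Finset.Icc 1 n, f i = ∑ i ∈ Finset.range n, f (i + 1) := fun n => by
    rw [Finset.range_eq_Ico, Finset.sum_Ico_add' f 0 n 1, ← Finset.Ico_add_one_right_eq_Icc]
  simpa only [hshift] using h.tendsto_sum_nat

section Decomposition
variable {Z : Type*} [NormedAddCommGroup Z] [NormedSpace ℝ Z] {P : ℕ → Z →L[ℝ] Z} {K M : ℝ}

variable (P M) in
def HasLowerTwoEstimate : Prop :=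
  ∀ (k : ℕ) (A : Fin k → Finset ℕ), Pairwise (Function.onFun Disjoint A) →
    ∀ z : Fin k → Z, (∀ i, ∑ n ∈ A i, P n (z i) = z i) → ∑ i, ‖z i‖ ^ 2 ≤ M * ‖∑ i, z i‖ ^ 2

lemma sum_apply_sum_eq_sum (hidem : ∀ n z, P n (P n z) = P n z)
    (horth : ∀ i j, i ≠ j → ∀ z, P i (P j z) = 0) (A : Finset ℕ) (z : Z) :
    ∑ n ∈ A, P n (∑ m ∈ A, P m z) = ∑ m ∈ A, P m z := by
  refine Finset.sum_congr rfl fun n hn => ?_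
  rw [map_sum, Finset.sum_eq_single_of_mem n hn fun m _ hmn => horth n m hmn.symm z, hidem]

lemma eq_zero_of_lowerTwo_const_neg (hidem : ∀ n z, P n (P n z) = P n z)
    (hdecomp : ∀ z : Z, HasSum (fun n => P (n + 1) z) z)
    (hM : HasLowerTwoEstimate P M) (hM0 : M < 0) (z : Z) : z = 0 := by
  have hP : ∀ n, P n z = 0 := fun n => by
    have h := hM 1 (fun _ => {n}) Subsingleton.pairwise (fun _ => P n z) (by simp [hidem])
    simp only [Finset.univ_unique, Finset.sum_singleton] at h
    have : ‖P n z‖ ^ 2 ≤ 0 := by nlinarith [sq_nonneg ‖P n z‖]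
    simpa using this
  exact (hdecomp z).unique (by simpa only [hP] using hasSum_zero)

lemma sum_norm_sq_le_of_lowerTwo (hidem : ∀ n z, P n (P n z) = P n z)
    (horth : ∀ i j, i ≠ j → ∀ z, P i (P j z) = 0)
    (hdecomp : ∀ z : Z, HasSum (fun n => P (n + 1) z) z)
    (hK : ∀ (F : Finset ℕ) (z : Z), ‖∑ n ∈ F, P n z‖ ≤ K * ‖z‖)
    (hM : HasLowerTwoEstimate P M)
    {ι : Type*} (s : Finset ι) (A : ι → Finset ℕ) (hA : (s : Set ι).PairwiseDisjoint A) (z : Z) :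
    ∑ i ∈ s, ‖∑ n ∈ A i, P n z‖ ^ 2 ≤ M * (K * ‖z‖) ^ 2 := by
  -- a negative `M` is possible only when `Z = 0`
  rcases lt_or_ge M 0 with hM0 | hM0
  · simp [eq_zero_of_lowerTwo_const_neg hidem hdecomp hM hM0 z]
  let e := s.equivFin
  have hdisj : Pairwise (Function.onFun Disjoint fun i => A (e.symm i)) := fun i j hij =>
    hA (e.symm i).2 (e.symm j).2 fun h => hij (e.symm.injective (Subtype.ext h))
  have hest := hM s.card _ hdisj (fun i => ∑ n ∈ A (e.symm i), P n z)
    fun i => sum_apply_sum_eq_sum hidem horth _ z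
  rw [e.symm.sum_comp (fun i : s => ‖∑ n ∈ A i, P n z‖ ^ 2),
    e.symm.sum_comp (fun i : s => ∑ n ∈ A i, P n z),
    Finset.sum_coe_sort s (fun i => ‖∑ n ∈ A i, P n z‖ ^ 2),
    Finset.sum_coe_sort s (fun i => ∑ n ∈ A i, P n z), ← Finset.sum_biUnion hA] at hest
  calc _ ≤ M * ‖∑ n ∈ s.biUnion A, P n z‖ ^ 2 := hest
    _ ≤ M * (K * ‖z‖) ^ 2 := by gcongr; exact hK _ z

end Decomposition

section SubmoduleChain
variable {Z : Type*} [NormedAddCommGroup Z] [NormedSpace ℝ Z] {Xs : ℕ → Submodule ℝ Z}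
  {φ : ∀ n, ↥(Xs n) →L[ℝ] ↥(Xs (n + 1))}

lemma coe_phiTo (hφ : ∀ n (v : ↥(Xs n)), ((φ n v : Z)) = (v : Z)) {p q : ℕ} (hp : p ≠ 0)
    (hpq : p ≤ q) (v : ↥(Xs p)) : (phiTo φ p q v : Z) = v := by
  induction q, hpq using Nat.le_induction with
  | base => rw [phiTo_self φ hp]; rfl
  | succ m hm ih => rw [phiTo_succ φ hm, ContinuousLinearMap.comp_apply, hφ, ih]

lemma norm_phiTo_sub (hφ : ∀ n (v : ↥(Xs n)), ((φ n v : Z)) = (v : Z)) (x : ∀ n, ↥(Xs n))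
    {p q : ℕ} (hp : p ≠ 0) (hpq : p ≤ q) :
    ‖phiTo φ p q (x p) - x q‖ = ‖(x p : Z) - x q‖ := by
  rw [Submodule.coe_norm, Submodule.coe_sub, coe_phiTo hφ hp hpq]

lemma cauchySeq_coe_of_memJhat (hφ : ∀ n (v : ↥(Xs n)), ((φ n v : Z)) = (v : Z))
    {x : ∀ n, ↥(Xs n)} (hx : memJhat φ x) : CauchySeq fun n => (x n : Z) := by
  obtain ⟨C, hC⟩ := memJhat_iff_exists_rho2_le.mp hx
  by_contra hx'
  obtain ⟨ε, hε, hosc⟩ : ∃ ε > 0, ∀ N, ∃ n ≥ N, ε ≤ ‖(x n : Z) - x N‖ := by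
    simpa [Metric.cauchySeq_iff', dist_eq_norm] using hx'
  -- appending to `S` an oscillation of size `ε` beyond `max S` raises `σ(x,S)²` by at least `ε²`
  have hgrow : ∀ k : ℕ, ∃ (S : Finset ℕ) (_ : S.Nonempty), k * ε ^ 2 ≤ sigma2 φ x S := by
    intro k
    induction k with
    | zero => exact ⟨{0}, Finset.singleton_nonempty 0, by simp [sigma2_singleton]⟩
    | succ k ih =>
      obtain ⟨S, hS, hk⟩ := ih
      set p := S.max' hS + 1
      obtain ⟨q, hpq, hεq⟩ := hosc p
      have hpq' : p < q := lt_of_le_of_ne hpq (by rintro rfl; simp at hεq; linarith)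
      have hpS : (insert p S).max' (Finset.insert_nonempty p S) = p := by
        rw [Finset.max'_insert p S hS]
        exact max_eq_left (Nat.le_succ _)
      refine ⟨insert q (insert p S), Finset.insert_nonempty _ _, ?_⟩
      rw [sigma2_insert_of_max'_lt φ x _ (hpS ▸ hpq'), hpS,
        sigma2_insert_of_max'_lt φ x hS (by omega), norm_phiTo_sub hφ x (by omega) hpq'.le]
      rw [norm_sub_rev] at hεq
      push_cast
      linarith [pow_le_pow_left₀ hε.le hεq 2,
        sq_nonneg ‖phiTo φ (S.max' hS) p (x (S.max' hS)) - x p‖]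
  obtain ⟨k, hk⟩ := exists_nat_gt (C / ε ^ 2)
  obtain ⟨S, hS, hkS⟩ := hgrow k
  have hkC := (hkS.trans (sigma2_le_rho2 S hS)).trans (hC S hS)
  rw [div_lt_iff₀ (by positivity)] at hk
  linarith

lemma norm_le_sSup_rhoSet_of_tendsto {x : ∀ n, ↥(Xs n)} (hx : memJhat φ x) {z : Z}
    (hlim : Tendsto (fun n => (x n : Z)) atTop (𝓝 z)) : ‖z‖ ≤ sSup (rhoSet φ x) :=
  le_of_tendsto hlim.norm <| Eventually.of_forall fun n => by
    rw [← Submodule.coe_norm]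
    exact norm_le_sSup_rhoSet hx n

end SubmoduleChain

section AggregateProjections
variable {Z : Type*} [NormedAddCommGroup Z] [NormedSpace ℝ Z] {Xs : ℕ → Submodule ℝ Z}
  {φ : ∀ n, ↥(Xs n) →L[ℝ] ↥(Xs (n + 1))} {P : ℕ → Z →L[ℝ] Z} {K M : ℝ}
  {T : Z → ∀ n, ↥(Xs n)}

lemma T_smul_add_smul (hT : ∀ z n, ((T z n : Z)) = ∑ i ∈ Finset.Icc 1 n, P i z) (a b : ℝ)
    (z w : Z) : T (a • z + b • w) = a • T z + b • T w := by
  funext n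
  apply Subtype.ext
  simp [hT, Finset.smul_sum, Finset.sum_add_distrib]

lemma tendsto_coe_T (hdecomp : ∀ z : Z, HasSum (fun n => P (n + 1) z) z)
    (hT : ∀ z n, ((T z n : Z)) = ∑ i ∈ Finset.Icc 1 n, P i z) (z : Z) :
    Tendsto (fun n => (T z n : Z)) atTop (𝓝 z) :=
  (tendsto_sum_Icc_of_hasSum (hdecomp z)).congr fun n => (hT z n).symm

lemma coe_phiTo_T (hφ : ∀ n (v : ↥(Xs n)), ((φ n v : Z)) = (v : Z))
    (hT : ∀ z n, ((T z n : Z)) = ∑ i ∈ Finset.Icc 1 n, P i z) (z : Z) {p q : ℕ} (hpq : p ≤ q) :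
    (phiTo φ p q (T z p) : Z) = ∑ i ∈ Finset.Icc 1 p, P i z := by
  rcases Nat.eq_zero_or_pos p with rfl | hp
  · simp [phiTo_zero_left]
  · rw [coe_phiTo hφ hp.ne' hpq, hT]

lemma norm_phiTo_T_sub (hφ : ∀ n (v : ↥(Xs n)), ((φ n v : Z)) = (v : Z))
    (hT : ∀ z n, ((T z n : Z)) = ∑ i ∈ Finset.Icc 1 n, P i z) (z : Z) {p q : ℕ} (hpq : p ≤ q) :
    ‖phiTo φ p q (T z p) - T z q‖ = ‖∑ i ∈ Finset.Ioc p q, P i z‖ := by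
  have hIcc : ∀ n, Finset.Icc 1 n = Finset.Ioc 0 n := Finset.Icc_add_one_left_eq_Ioc 0
  rw [Submodule.coe_norm, Submodule.coe_sub, coe_phiTo_T hφ hT z hpq, hT, norm_sub_rev, hIcc,
    hIcc, ← Finset.sum_Ioc_consecutive _ (Nat.zero_le p) hpq, add_sub_cancel_left]

lemma rho2_T_le (hidem : ∀ n z, P n (P n z) = P n z)
    (horth : ∀ i j, i ≠ j → ∀ z, P i (P j z) = 0)
    (hdecomp : ∀ z : Z, HasSum (fun n => P (n + 1) z) z)
    (hK : ∀ (F : Finset ℕ) (z : Z), ‖∑ n ∈ F, P n z‖ ≤ K * ‖z‖) (hM : HasLowerTwoEstimate P M)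
    (hφ : ∀ n (v : ↥(Xs n)), ((φ n v : Z)) = (v : Z))
    (hT : ∀ z n, ((T z n : Z)) = ∑ i ∈ Finset.Icc 1 n, P i z)
    (z : Z) (S : Finset ℕ) (hS : S.Nonempty) :
    rho2 φ (T z) S hS ≤ (M + 1) * (K * ‖z‖) ^ 2 := by
  have hσ : sigma2 φ (T z) S ≤ M * (K * ‖z‖) ^ 2 := by
    rw [sigma2_eq_sum_consPairs, Finset.sum_congr rfl fun pq hpq => by
      rw [norm_phiTo_T_sub hφ hT z (mem_consPairs.mp hpq).2.2.1.le]]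
    exact sum_norm_sq_le_of_lowerTwo hidem horth hdecomp hK hM _ _
      (pairwiseDisjoint_Ioc_consPairs S) z
  have hlast : ‖T z (S.max' hS)‖ ^ 2 ≤ (K * ‖z‖) ^ 2 := by
    gcongr
    rw [Submodule.coe_norm, hT]
    exact hK _ z
  rw [rho2]
  linarith

lemma memJhat_T (hidem : ∀ n z, P n (P n z) = P n z)
    (horth : ∀ i j, i ≠ j → ∀ z, P i (P j z) = 0)
    (hdecomp : ∀ z : Z, HasSum (fun n => P (n + 1) z) z)
    (hK : ∀ (F : Finset ℕ) (z : Z), ‖∑ n ∈ F, P n z‖ ≤ K * ‖z‖) (hM : HasLowerTwoEstimate P M)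
    (hφ : ∀ n (v : ↥(Xs n)), ((φ n v : Z)) = (v : Z))
    (hT : ∀ z n, ((T z n : Z)) = ∑ i ∈ Finset.Icc 1 n, P i z) (z : Z) :
    memJhat φ (T z) :=
  memJhat_iff_exists_rho2_le.mpr ⟨_, rho2_T_le hidem horth hdecomp hK hM hφ hT z⟩

lemma normJ_T_le (hidem : ∀ n z, P n (P n z) = P n z)
    (horth : ∀ i j, i ≠ j → ∀ z, P i (P j z) = 0)
    (hdecomp : ∀ z : Z, HasSum (fun n => P (n + 1) z) z)
    (hK : ∀ (F : Finset ℕ) (z : Z), ‖∑ n ∈ F, P n z‖ ≤ K * ‖z‖) (hM : HasLowerTwoEstimate P M)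
    (hφ : ∀ n (v : ↥(Xs n)), ((φ n v : Z)) = (v : Z))
    (hT : ∀ z n, ((T z n : Z)) = ∑ i ∈ Finset.Icc 1 n, P i z) (z : Z) :
    normJ φ (T z) ≤ √((M + 1) / 2) * K * ‖z‖ := by
  have hKz : 0 ≤ K * ‖z‖ := by simpa using hK ∅ z
  calc normJ φ (T z) ≤ (√2)⁻¹ * √((M + 1) * (K * ‖z‖) ^ 2) :=
        normJ_le_of_rho2_le (rho2_T_le hidem horth hdecomp hK hM hφ hT z)
    _ = √((M + 1) / 2) * K * ‖z‖ := by
        rw [Real.sqrt_mul' _ (sq_nonneg _), Real.sqrt_sq hKz, Real.sqrt_div' _ zero_le_two]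
        ring

lemma existsUnique_memJ_add_T [CompleteSpace Z]
    (hdecomp : ∀ z : Z, HasSum (fun n => P (n + 1) z) z)
    (hφ : ∀ n (v : ↥(Xs n)), ((φ n v : Z)) = (v : Z))
    (hT : ∀ z n, ((T z n : Z)) = ∑ i ∈ Finset.Icc 1 n, P i z) (hTJ : ∀ z, memJhat φ (T z))
    {x : ∀ n, ↥(Xs n)} (hx : memJhat φ x) :
    ∃! yz : (∀ n, ↥(Xs n)) × Z, memJ φ yz.1 ∧ x = yz.1 + T yz.2 := by
  obtain ⟨z, hz⟩ := cauchySeq_tendsto_of_complete (cauchySeq_coe_of_memJhat hφ hx)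
  refine ⟨(x - T z, z), ⟨⟨hx.sub (hTJ z), ?_⟩, (sub_add_cancel x (T z)).symm⟩, ?_⟩
  · simpa using (hz.sub (tendsto_coe_T hdecomp hT z)).norm
  · rintro ⟨y, w⟩ ⟨⟨-, hy⟩, rfl⟩
    have hw : w = z := by
      refine tendsto_nhds_unique ?_ hz
      simpa using (tendsto_zero_iff_norm_tendsto_zero.mpr hy).add (tendsto_coe_T hdecomp hT w)
    subst hw
    simp

end AggregateProjections

theorem stmt17_general {Z : Type*} [NormedAddCommGroup Z] [NormedSpace ℝ Z] [CompleteSpace Z]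
    (W : ℕ → Submodule ℝ Z) (P : ℕ → Z →L[ℝ] Z) (K M : ℝ)
    -- `(W n)_{n ≥ 1}` is a Schauder decomposition of `Z` with projections `P n`
    (hmem : ∀ n z, P n z ∈ W n)
    (hproj : ∀ n, ∀ z ∈ W n, P n z = z)
    (horth : ∀ i j, i ≠ j → ∀ z, P i (P j z) = 0)
    (hdecomp : ∀ z : Z, HasSum (fun n => P (n + 1) z) z)
    -- suppression constant `K`
    (hK : ∀ (F : Finset ℕ) (z : Z), ‖∑ n ∈ F, P n z‖ ≤ K * ‖z‖)
    -- lower 2-estimate with constant `M` for disjointly supported vectors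
    (hM : ∀ (k : ℕ) (A : Fin k → Finset ℕ), Pairwise (Function.onFun Disjoint A) →
      ∀ z : Fin k → Z, (∀ i, ∑ n ∈ A i, P n (z i) = z i) →
      ∑ i, ‖z i‖ ^ 2 ≤ M * ‖∑ i, z i‖ ^ 2)
    -- the chain `X_n = Z_1 ⊕ ⋯ ⊕ Z_n` with norm-one inclusions `φ_n`
    (Xs : ℕ → Submodule ℝ Z)
    (φ : ∀ n, ↥(Xs n) →L[ℝ] ↥(Xs (n + 1)))
    (hφ : ∀ n (v : ↥(Xs n)), ((φ n v : Z)) = (v : Z))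
    -- the map `T(z) = (T_n(z))_n` built from the aggregate projections `T_n = Σ_{i≤n} P_i`
    (T : Z → ∀ n, ↥(Xs n))
    (hT : ∀ z n, ((T z n : Z)) = ∑ i ∈ Finset.Icc 1 n, P i z) :
    -- `T` is linear
    (∀ (a b : ℝ) (z w : Z), T (a • z + b • w) = a • T z + b • T w) ∧
    -- `T` maps into `Ĵ(X_n)` with `‖T(z)‖_J ≤ √((M+1)/2)·K·‖z‖`
    (∀ z, memJhat φ (T z)) ∧
    (∀ z, normJ φ (T z) ≤ Real.sqrt ((M + 1) / 2) * K * ‖z‖) ∧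
    -- `T` is an embedding
    (∃ c : ℝ, 0 < c ∧ ∀ z, c * ‖z‖ ≤ normJ φ (T z)) ∧
    -- `Ĵ(X_n) = J(X_n) ⊕ R(T)`
    (∀ x : ∀ n, ↥(Xs n), memJhat φ x →
      ∃! yz : (∀ n, ↥(Xs n)) × Z, memJ φ yz.1 ∧ x = yz.1 + T yz.2) := by
  have hidem : ∀ n z, P n (P n z) = P n z := fun n z => hproj n _ (hmem n z)
  have hTJ : ∀ z, memJhat φ (T z) := memJhat_T hidem horth hdecomp hK hM hφ hT
  refine ⟨T_smul_add_smul hT, hTJ, normJ_T_le hidem horth hdecomp hK hM hφ hT,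
    ⟨(√2)⁻¹, by positivity, fun z => ?_⟩,
    fun x hx => existsUnique_memJ_add_T hdecomp hφ hT hTJ hx⟩
  exact mul_le_mul_of_nonneg_left
    (norm_le_sSup_rhoSet_of_tendsto (hTJ z) (tendsto_coe_T hdecomp hT z)) (by positivity)

/-- let `Z` be a Banach space with an unconditional Schauder
decomposition `(Z_n)_{n≥1}` (given by coordinate projections `P n` onto `Z_n = W n`)
with suppression constant `K` and lower 2-estimate constant `M`, let
`X_n = Z_1 ⊕ ⋯ ⊕ Z_n` with inclusions `φ_n`, and let `T_n = P_1 + ⋯ + P_n` be the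
aggregate projections. Then `T(z) = (T_n(z))_n` is a bounded linear embedding of `Z`
into `Ĵ(X_n)` with `‖T(z)‖_J ≤ √((M+1)/2)·K·‖z‖`, and `Ĵ(X_n) = J(X_n) ⊕ R(T)`. -/
theorem stmt17 {Z : Type*} [NormedAddCommGroup Z] [NormedSpace ℝ Z] [CompleteSpace Z]
    (W : ℕ → Submodule ℝ Z) (P : ℕ → Z →L[ℝ] Z) (K M : ℝ)
    -- `(W n)_{n ≥ 1}` is a Schauder decomposition of `Z` with projections `P n`
    (hmem : ∀ n z, P n z ∈ W n)
    (hproj : ∀ n, ∀ z ∈ W n, P n z = z)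
    (horth : ∀ i j, i ≠ j → ∀ z, P i (P j z) = 0)
    (hdecomp : ∀ z : Z, HasSum (fun n => P (n + 1) z) z)
    -- suppression constant `K`
    (hK : ∀ (F : Finset ℕ) (z : Z), ‖∑ n ∈ F, P n z‖ ≤ K * ‖z‖)
    -- lower 2-estimate with constant `M` for disjointly supported vectors
    (hM : ∀ (k : ℕ) (A : Fin k → Finset ℕ), Pairwise (Function.onFun Disjoint A) →
      ∀ z : Fin k → Z, (∀ i, ∑ n ∈ A i, P n (z i) = z i) →
      ∑ i, ‖z i‖ ^ 2 ≤ M * ‖∑ i, z i‖ ^ 2)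
    -- the chain `X_n = Z_1 ⊕ ⋯ ⊕ Z_n` with norm-one inclusions `φ_n`
    (Xs : ℕ → Submodule ℝ Z)
    (hXs : ∀ n, Xs n = ⨆ i ∈ Finset.Icc 1 n, W i)
    (φ : ∀ n, ↥(Xs n) →L[ℝ] ↥(Xs (n + 1)))
    (hφ : ∀ n (v : ↥(Xs n)), ((φ n v : Z)) = (v : Z))
    -- the map `T(z) = (T_n(z))_n` built from the aggregate projections `T_n = Σ_{i≤n} P_i`
    (T : Z → ∀ n, ↥(Xs n))
    (hT : ∀ z n, ((T z n : Z)) = ∑ i ∈ Finset.Icc 1 n, P i z) :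
    -- `T` is linear
    (∀ (a b : ℝ) (z w : Z), T (a • z + b • w) = a • T z + b • T w) ∧
    -- `T` maps into `Ĵ(X_n)` with `‖T(z)‖_J ≤ √((M+1)/2)·K·‖z‖`
    (∀ z, memJhat φ (T z)) ∧
    (∀ z, normJ φ (T z) ≤ Real.sqrt ((M + 1) / 2) * K * ‖z‖) ∧
    -- `T` is an embedding
    (∃ c : ℝ, 0 < c ∧ ∀ z, c * ‖z‖ ≤ normJ φ (T z)) ∧
    -- `Ĵ(X_n) = J(X_n) ⊕ R(T)`
    (∀ x : ∀ n, ↥(Xs n), memJhat φ x →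
      ∃! yz : (∀ n, ↥(Xs n)) × Z, memJ φ yz.1 ∧ x = yz.1 + T yz.2) :=
  stmt17_general W P K M hmem hproj horth hdecomp hK hM Xs φ hφ T hT
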